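/- arXiv:2201.12620 — 4 statements merged into one kernel-verified Lean document; each statement's English description precedes it below -/
import Mathlib

section
/- Let (M, d) be a metric space, p ≥ 1, π ∈ Δ^{n-1}, and let A, B ∈ M_n(ℝ) be π-stationary row-stochastic matrices. For x = (x_1,…,x_n) ∈ M^n with not all components equal, define the nonlinear Rayleigh quotient R(x; A, d^p) = (Σ_{i,j} π_i a_{ij} d(x_i,x_j)^p) / (Σ_{i,j} π_i π_j d(x_i,x_j)^p). Then R(x; AB, d^p)^{1/p} ≤ R(x; A, d^p)^{1/p} + R(x; B, d^p)^{1/p}. -/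
/-!
Expand the numerator of `R(x; AB)` as a sum over paths `i → j → k` with weights
`π_i a_ij b_jk`. Row-stochasticity of `B` turns the same path sum with `d(x_i, x_j)^p` into the
numerator of `R(x; A)`, and `π`-stationarity of `A` turns it with `d(x_j, x_k)^p` into the
numerator of `R(x; B)`. The triangle inequality `d(x_i, x_k) ≤ d(x_i, x_j) + d(x_j, x_k)` and
Minkowski's inequality for the weighted `ℓ^p` norm over paths then give the claim; dividing by
the common denominator preserves it.
-/

/-- The nonlinear Rayleigh quotient of a point configuration `x` in a metric
space `M` with respect to a stochastic matrix `A`, weights `w` and power `p`. -/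
noncomputable def rayleigh {M : Type*} [MetricSpace M] {n : ℕ} (w : Fin n → ℝ)
    (A : Matrix (Fin n) (Fin n) ℝ) (x : Fin n → M) (p : ℝ) : ℝ :=
  (∑ i, ∑ j, w i * A i j * dist (x i) (x j) ^ p) /
    (∑ i, ∑ j, w i * w j * dist (x i) (x j) ^ p)

open Finset

section PathSums

variable {ι R : Type*} [Fintype ι] [CommSemiring R] (w : ι → R) (A B : Matrix ι ι R)
  (f : ι → ι → R)

theorem sum_sum_mul_matrix_mul :
    ∑ i, ∑ k, w i * (A * B) i k * f i k = ∑ i, ∑ j, ∑ k, w i * A i j * B j k * f i k := by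
  refine sum_congr rfl fun i _ => ?_
  rw [sum_comm]
  refine sum_congr rfl fun k _ => ?_
  simp only [Matrix.mul_apply, mul_sum, sum_mul]
  exact sum_congr rfl fun j _ => by ring

theorem sum_path_eq_of_row_sum_eq_one (hB : ∀ j, ∑ k, B j k = 1) :
    ∑ i, ∑ j, ∑ k, w i * A i j * B j k * f i j = ∑ i, ∑ j, w i * A i j * f i j := by
  refine sum_congr rfl fun i _ => sum_congr rfl fun j _ => ?_
  simp only [mul_right_comm _ (B j _), ← mul_sum, hB j, mul_one]

theorem sum_path_eq_of_stationary (hA : ∀ j, ∑ i, w i * A i j = w j) :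
    ∑ i, ∑ j, ∑ k, w i * A i j * B j k * f j k = ∑ j, ∑ k, w j * B j k * f j k := by
  rw [sum_comm]
  refine sum_congr rfl fun j _ => ?_
  simp only [mul_assoc, ← mul_sum]
  simp only [← mul_assoc, ← sum_mul, hA j]

end PathSums

theorem Real.weighted_Lp_add_le_of_nonneg {τ : Type*} (s : Finset τ) {c f g : τ → ℝ} {p : ℝ}
    (hp : 1 ≤ p) (hc : ∀ t ∈ s, 0 ≤ c t) (hf : ∀ t ∈ s, 0 ≤ f t) (hg : ∀ t ∈ s, 0 ≤ g t) :
    (∑ t ∈ s, c t * (f t + g t) ^ p) ^ (1 / p) ≤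
      (∑ t ∈ s, c t * f t ^ p) ^ (1 / p) + (∑ t ∈ s, c t * g t ^ p) ^ (1 / p) := by
  have absorb : ∀ t ∈ s, ∀ a, 0 ≤ a → c t * a ^ p = (c t ^ (1 / p) * a) ^ p := by
    intro t ht a ha
    rw [Real.mul_rpow (Real.rpow_nonneg (hc t ht) _) ha, ← Real.rpow_mul (hc t ht),
      one_div_mul_cancel (by linarith), Real.rpow_one]
  rw [sum_congr rfl fun t ht => absorb t ht _ (add_nonneg (hf t ht) (hg t ht)),
    sum_congr rfl fun t ht => absorb t ht _ (hf t ht),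
    sum_congr rfl fun t ht => absorb t ht _ (hg t ht)]
  simp only [mul_add]
  exact Real.Lp_add_le_of_nonneg s hp
    (fun t ht => mul_nonneg (Real.rpow_nonneg (hc t ht) _) (hf t ht))
    (fun t ht => mul_nonneg (Real.rpow_nonneg (hc t ht) _) (hg t ht))

theorem weighted_Lp_dist_triangle {τ M : Type*} [PseudoMetricSpace M] (s : Finset τ)
    {c : τ → ℝ} {p : ℝ} (hp : 1 ≤ p) (hc : ∀ t ∈ s, 0 ≤ c t) (y m z : τ → M) :
    (∑ t ∈ s, c t * dist (y t) (z t) ^ p) ^ (1 / p) ≤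
      (∑ t ∈ s, c t * dist (y t) (m t) ^ p) ^ (1 / p) +
        (∑ t ∈ s, c t * dist (m t) (z t) ^ p) ^ (1 / p) := by
  have hp0 : 0 < p := by linarith
  refine le_trans ?_ (Real.weighted_Lp_add_le_of_nonneg s hp hc
    (fun _ _ => dist_nonneg) (fun _ _ => dist_nonneg))
  refine Real.rpow_le_rpow (sum_nonneg fun t ht => mul_nonneg (hc t ht) (by positivity))
    (sum_le_sum fun t ht => mul_le_mul_of_nonneg_left ?_ (hc t ht)) (by positivity)
  exact Real.rpow_le_rpow dist_nonneg (dist_triangle _ _ _) hp0.le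

theorem Real.div_rpow_le_add_of_rpow_le {a b c D r : ℝ} (ha : 0 ≤ a) (hb : 0 ≤ b) (hc : 0 ≤ c)
    (hD : 0 ≤ D) (h : a ^ r ≤ b ^ r + c ^ r) :
    (a / D) ^ r ≤ (b / D) ^ r + (c / D) ^ r := by
  rw [Real.div_rpow ha hD, Real.div_rpow hb hD, Real.div_rpow hc hD, ← add_div]
  exact div_le_div_of_nonneg_right h (Real.rpow_nonneg hD r)

theorem sum_sum_mul_rpow_dist_nonneg {ι M : Type*} [Fintype ι] [PseudoMetricSpace M]
    {w : ι → ℝ} {A : Matrix ι ι ℝ} (hw : ∀ i, 0 ≤ w i) (hA : ∀ i j, 0 ≤ A i j) (x : ι → M)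
    (p : ℝ) : 0 ≤ ∑ i, ∑ j, w i * A i j * dist (x i) (x j) ^ p :=
  sum_nonneg fun i _ => sum_nonneg fun j _ =>
    mul_nonneg (mul_nonneg (hw i) (hA i j)) (Real.rpow_nonneg dist_nonneg p)

theorem rayleigh_mul_le_general {M : Type*} [MetricSpace M] (n : ℕ) (p : ℝ) (hp : 1 ≤ p)
    (w : Fin n → ℝ) (hwpos : ∀ i, 0 < w i)
    (A B : Matrix (Fin n) (Fin n) ℝ)
    (hA0 : ∀ i j, 0 ≤ A i j)
    (hAstat : ∀ j, ∑ i, w i * A i j = w j)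
    (hB0 : ∀ i j, 0 ≤ B i j) (hBrow : ∀ i, ∑ j, B i j = 1)
    (x : Fin n → M) :
    rayleigh w (A * B) x p ^ (1 / p) ≤
      rayleigh w A x p ^ (1 / p) + rayleigh w B x p ^ (1 / p) := by
  have hw : ∀ i, 0 ≤ w i := fun i => (hwpos i).le
  have hAB : ∀ i k, 0 ≤ (A * B) i k := fun i k =>
    Matrix.mul_apply (M := A) ▸ sum_nonneg fun j _ => mul_nonneg (hA0 i j) (hB0 j k)
  have hpaths := weighted_Lp_dist_triangle univ hp
    (c := fun t : Fin n × Fin n × Fin n => w t.1 * A t.1 t.2.1 * B t.2.1 t.2.2)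
    (fun t _ => mul_nonneg (mul_nonneg (hw _) (hA0 _ _)) (hB0 _ _))
    (fun t => x t.1) (fun t => x t.2.1) (fun t => x t.2.2)
  simp only [Fintype.sum_prod_type] at hpaths
  rw [sum_path_eq_of_row_sum_eq_one w A B (fun i j => dist (x i) (x j) ^ p) hBrow,
    sum_path_eq_of_stationary w A B (fun j k => dist (x j) (x k) ^ p) hAstat,
    ← sum_sum_mul_matrix_mul w A B (fun i k => dist (x i) (x k) ^ p)] at hpaths
  exact Real.div_rpow_le_add_of_rpow_le (sum_sum_mul_rpow_dist_nonneg hw hAB x p)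
    (sum_sum_mul_rpow_dist_nonneg hw hA0 x p) (sum_sum_mul_rpow_dist_nonneg hw hB0 x p)
    (sum_sum_mul_rpow_dist_nonneg (A := fun _ j => w j) hw (fun _ j => hw j) x p) hpaths

/-- Subadditivity of the `p`-th root of nonlinear Rayleigh quotients under
matrix products: R(x; AB, d^p)^{1/p} ≤ R(x; A, d^p)^{1/p} + R(x; B, d^p)^{1/p}. -/
theorem rayleigh_mul_le {M : Type*} [MetricSpace M] (n : ℕ) (p : ℝ) (hp : 1 ≤ p)
    (w : Fin n → ℝ) (hwpos : ∀ i, 0 < w i) (hwsum : ∑ i, w i = 1)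
    (A B : Matrix (Fin n) (Fin n) ℝ)
    (hA0 : ∀ i j, 0 ≤ A i j) (hArow : ∀ i, ∑ j, A i j = 1)
    (hAstat : ∀ j, ∑ i, w i * A i j = w j)
    (hB0 : ∀ i j, 0 ≤ B i j) (hBrow : ∀ i, ∑ j, B i j = 1)
    (hBstat : ∀ j, ∑ i, w i * B i j = w j)
    (x : Fin n → M) (hx : ∃ i j, x i ≠ x j) :
    rayleigh w (A * B) x p ^ (1 / p) ≤
      rayleigh w A x p ^ (1 / p) + rayleigh w B x p ^ (1 / p) :=
  rayleigh_mul_le_general n p hp w hwpos A B hA0 hAstat hB0 hBrow x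
end

section
/- Let X be a normed space equipped with an additional Hilbertian norm ‖·‖_H satisfying ‖y‖_H ≤ ‖y‖_X ≤ D‖y‖_H for all y ∈ X, where D ≥ 1. Fix π ∈ Δ^{n-1}, a π-reversible stochastic matrix B, η ∈ (0, 1/D), and x ∈ X^n with Σ_i π_i x_i = 0 and not all x_i equal. If R(x; B², ‖·‖_H²) ≥ 1 − η², then R(x; B, ‖·‖_X²) ≥ (1 − ηD)²/4. -/
open Finset RealInnerProductSpace

lemma rayleigh_expand_aux {H : Type*} [NormedAddCommGroup H] [InnerProductSpace ℝ H]
    {n : ℕ} (w : Fin n → ℝ) (C : Matrix (Fin n) (Fin n) ℝ)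
    (hrows : ∀ i, ∑ j, C i j = 1) (hrev : ∀ i j, w i * C i j = w j * C j i)
    (y : Fin n → H) :
    ∑ i, ∑ j, w i * C i j * ‖y i - y j‖ ^ 2 =
      2 * (∑ i, w i * ‖y i‖ ^ 2) - 2 * ∑ i, w i * ⟪y i, ∑ j, C i j • y j⟫ := by
  have hA : ∀ (i : Fin n), ∑ j, w i * C i j * ‖y i‖ ^ 2 = w i * ‖y i‖ ^ 2 := by
    intro i
    rw [show (∑ j, w i * C i j * ‖y i‖ ^ 2) = (w i * ‖y i‖ ^ 2) * ∑ j, C i j from by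
      rw [Finset.mul_sum]; exact Finset.sum_congr rfl fun j _ => by ring, hrows, mul_one]
  have hB : ∑ i, ∑ j, w i * C i j * ‖y j‖ ^ 2 = ∑ i, w i * ‖y i‖ ^ 2 := by
    have h1 : ∑ i, ∑ j, w i * C i j * ‖y j‖ ^ 2 = ∑ i, ∑ j, w j * C j i * ‖y j‖ ^ 2 :=
      Finset.sum_congr rfl fun i _ => Finset.sum_congr rfl fun j _ => by rw [hrev i j]
    rw [h1, Finset.sum_comm]
    exact Finset.sum_congr rfl fun j _ => hA j
  have hC : ∀ (i : Fin n), w i * ⟪y i, ∑ j, C i j • y j⟫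
      = ∑ j, w i * C i j * ⟪y i, y j⟫ := by
    intro i
    rw [inner_sum, Finset.mul_sum]
    exact Finset.sum_congr rfl fun j _ => by rw [real_inner_smul_right]; ring
  calc ∑ i, ∑ j, w i * C i j * ‖y i - y j‖ ^ 2
      = ∑ i, ∑ j, (w i * C i j * ‖y i‖ ^ 2 + w i * C i j * ‖y j‖ ^ 2
          - 2 * (w i * C i j * ⟪y i, y j⟫)) := by
        refine Finset.sum_congr rfl fun i _ => Finset.sum_congr rfl fun j _ => ?_
        rw [norm_sub_sq_real]; ring
    _ = (∑ i, ∑ j, w i * C i j * ‖y i‖ ^ 2) + (∑ i, ∑ j, w i * C i j * ‖y j‖ ^ 2)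
          - 2 * (∑ i, ∑ j, w i * C i j * ⟪y i, y j⟫) := by
        rw [Finset.mul_sum, ← Finset.sum_add_distrib, ← Finset.sum_sub_distrib]
        refine Finset.sum_congr rfl fun i _ => ?_
        rw [Finset.mul_sum, ← Finset.sum_add_distrib, ← Finset.sum_sub_distrib]
    _ = 2 * (∑ i, w i * ‖y i‖ ^ 2) - 2 * ∑ i, w i * ⟪y i, ∑ j, C i j • y j⟫ := by
        rw [hB, Finset.sum_congr rfl fun i (_ : i ∈ univ) => hA i,
          Finset.sum_congr rfl fun i (_ : i ∈ univ) => hC i]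
        ring

lemma rayleigh_selfadj_aux {H : Type*} [NormedAddCommGroup H] [InnerProductSpace ℝ H]
    {n : ℕ} (w : Fin n → ℝ) (B : Matrix (Fin n) (Fin n) ℝ)
    (hrev : ∀ i j, w i * B i j = w j * B j i) (y : Fin n → H) :
    ∑ i, w i * ⟪y i, ∑ j, (B * B) i j • y j⟫
      = ∑ k, w k * ‖∑ j, B k j • y j‖ ^ 2 := by
  set z : Fin n → H := fun k => ∑ j, B k j • y j with hz
  have h1 : ∀ (i : Fin n), ∑ j, (B * B) i j • y j = ∑ k, B i k • z k := by
    intro i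
    simp only [hz, Matrix.mul_apply, Finset.sum_smul, mul_smul, Finset.smul_sum]
    exact Finset.sum_comm
  calc ∑ i, w i * ⟪y i, ∑ j, (B * B) i j • y j⟫
      = ∑ i, ∑ k, (w i * B i k) * ⟪y i, z k⟫ := by
        refine Finset.sum_congr rfl fun i _ => ?_
        rw [h1 i, inner_sum, Finset.mul_sum]
        exact Finset.sum_congr rfl fun k _ => by rw [real_inner_smul_right]; ring
    _ = ∑ k, ∑ i, (w k * B k i) * ⟪y i, z k⟫ := by
        rw [Finset.sum_comm]
        exact Finset.sum_congr rfl fun k _ => Finset.sum_congr rfl fun i _ => by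
          rw [hrev i k]
    _ = ∑ k, w k * ⟪z k, z k⟫ := by
        refine Finset.sum_congr rfl fun k _ => ?_
        rw [show (⟪z k, z k⟫) = ⟪∑ i, B k i • y i, z k⟫ from rfl, sum_inner,
          Finset.mul_sum]
        exact Finset.sum_congr rfl fun i _ => by rw [real_inner_smul_left]; ring
    _ = ∑ k, w k * ‖z k‖ ^ 2 := by
        refine Finset.sum_congr rfl fun k _ => ?_
        rw [real_inner_self_eq_norm_sq]

set_option maxHeartbeats 1000000 in
/-- Pointwise Rayleigh quotient estimate for a normed space `X` admitting an
auxiliary Hilbertian norm (realized via a linear map `T` into a Hilbert space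
`H`) with ‖Ty‖ ≤ ‖y‖_X ≤ D‖Ty‖: if R(x; B², ‖·‖_H²) ≥ 1 − η², then
R(x; B, ‖·‖_X²) ≥ (1 − ηD)²/4. -/
theorem rayleigh_lower_bound_of_hilbertian {X H : Type*}
    [NormedAddCommGroup X] [NormedSpace ℝ X]
    [NormedAddCommGroup H] [InnerProductSpace ℝ H]
    (T : X →ₗ[ℝ] H) (D : ℝ) (hD : 1 ≤ D)
    (hT : ∀ y : X, ‖T y‖ ≤ ‖y‖ ∧ ‖y‖ ≤ D * ‖T y‖)
    (n : ℕ) (w : Fin n → ℝ) (hwpos : ∀ i, 0 < w i) (hwsum : ∑ i, w i = 1)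
    (B : Matrix (Fin n) (Fin n) ℝ)
    (hB0 : ∀ i j, 0 ≤ B i j) (hBrow : ∀ i, ∑ j, B i j = 1)
    (hrev : ∀ i j, w i * B i j = w j * B j i)
    (η : ℝ) (hη0 : 0 < η) (hη1 : η < 1 / D)
    (x : Fin n → X) (hmean : ∑ i, w i • x i = 0) (hx : ∃ i j, x i ≠ x j)
    (hR : 1 - η ^ 2 ≤
      (∑ i, ∑ j, w i * (B * B) i j * ‖T (x i) - T (x j)‖ ^ 2) /
        (∑ i, ∑ j, w i * w j * ‖T (x i) - T (x j)‖ ^ 2)) :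
    (1 - η * D) ^ 2 / 4 ≤
      (∑ i, ∑ j, w i * B i j * ‖x i - x j‖ ^ 2) /
        (∑ i, ∑ j, w i * w j * ‖x i - x j‖ ^ 2) := by
  have hDpos : (0:ℝ) < D := lt_of_lt_of_le one_pos hD
  have hηD : η * D < 1 := (lt_div_iff₀ hDpos).mp hη1
  have h1ηD : 0 < 1 - η * D := by linarith
  have hy0 : ∑ j, (w j : ℝ) • T (x j) = 0 := by
    have h1 : ∑ j, (w j : ℝ) • T (x j) = T (∑ j, w j • x j) := by
      rw [map_sum]
      exact Finset.sum_congr rfl fun j _ => (map_smul T (w j) (x j)).symm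
    rw [h1, hmean, map_zero]
  -- abbreviations (opaque)
  obtain ⟨E, hE⟩ : ∃ E : ℝ, E = ∑ i, w i * ‖T (x i)‖ ^ 2 := ⟨_, rfl⟩
  obtain ⟨M, hM⟩ : ∃ M : ℝ, M = ∑ i, w i * ‖x i‖ ^ 2 := ⟨_, rfl⟩
  obtain ⟨Q, hQ⟩ : ∃ Q : ℝ, Q = ∑ i, w i * ‖∑ j, B i j • T (x j)‖ ^ 2 := ⟨_, rfl⟩
  obtain ⟨P, hP⟩ : ∃ P : ℝ, P = ∑ i, w i * ‖x i - ∑ j, B i j • x j‖ ^ 2 := ⟨_, rfl⟩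
  -- B*B data
  have hrowsBB : ∀ i, ∑ j, (B * B) i j = 1 := by
    intro i
    simp only [Matrix.mul_apply]
    rw [Finset.sum_comm]
    have h1 : ∀ k, ∑ j, B i k * B k j = B i k := by
      intro k; rw [← Finset.mul_sum, hBrow, mul_one]
    rw [Finset.sum_congr rfl fun k _ => h1 k, hBrow]
  have hrevBB : ∀ i j, w i * (B * B) i j = w j * (B * B) j i := by
    intro i j
    simp only [Matrix.mul_apply, Finset.mul_sum]
    refine Finset.sum_congr rfl fun k _ => ?_
    calc w i * (B i k * B k j) = (w i * B i k) * B k j := by ring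
      _ = (w k * B k i) * B k j := by rw [hrev]
      _ = B k i * (w k * B k j) := by ring
      _ = B k i * (w j * B j k) := by rw [hrev]
      _ = w j * (B j k * B k i) := by ring
  -- denominator identity in H
  have hden : ∑ i, ∑ j, w i * w j * ‖T (x i) - T (x j)‖ ^ 2 = 2 * E := by
    have h := rayleigh_expand_aux w (Matrix.of fun _ j => w j) (fun _ => hwsum)
      (fun i j => mul_comm (w i) (w j)) (fun i => T (x i))
    simp only [Matrix.of_apply] at h
    rw [h, hy0]
    simp only [inner_zero_right, mul_zero, Finset.sum_const_zero]
    rw [← hE]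
    ring
  -- numerator identity in H
  have hnum : ∑ i, ∑ j, w i * (B * B) i j * ‖T (x i) - T (x j)‖ ^ 2 = 2 * E - 2 * Q := by
    rw [rayleigh_expand_aux w (B * B) hrowsBB hrevBB (fun i => T (x i)),
      rayleigh_selfadj_aux w B hrev (fun i => T (x i)), ← hE, ← hQ]
  -- positivity of the H-denominator
  obtain ⟨i0, j0, hij⟩ := hx
  have hyij : T (x i0) ≠ T (x j0) := by
    intro hc
    apply hij
    have h1 : ‖x i0 - x j0‖ ≤ D * ‖T (x i0 - x j0)‖ := (hT _).2
    rw [map_sub, hc, sub_self, norm_zero, mul_zero] at h1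
    rw [← sub_eq_zero]
    exact norm_le_zero_iff.mp h1
  have hdpos : 0 < ∑ i, ∑ j, w i * w j * ‖T (x i) - T (x j)‖ ^ 2 := by
    refine Finset.sum_pos' (fun i _ => Finset.sum_nonneg fun j _ =>
      mul_nonneg (mul_nonneg (hwpos i).le (hwpos j).le) (sq_nonneg _)) ⟨i0, mem_univ _, ?_⟩
    refine Finset.sum_pos' (fun j _ =>
      mul_nonneg (mul_nonneg (hwpos i0).le (hwpos j).le) (sq_nonneg _)) ⟨j0, mem_univ _, ?_⟩
    exact mul_pos (mul_pos (hwpos i0) (hwpos j0))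
      (pow_pos (norm_pos_iff.mpr (sub_ne_zero.mpr hyij)) 2)
  have hEpos : 0 < E := by rw [hden] at hdpos; linarith
  -- from hR: Q ≤ η² E
  have hQle : Q ≤ η ^ 2 * E := by
    rw [hnum, hden, le_div_iff₀ (by linarith)] at hR
    nlinarith [hR]
  -- E ≤ M
  have hEM : E ≤ M := by
    rw [hE, hM]
    exact Finset.sum_le_sum fun i _ => mul_le_mul_of_nonneg_left
      (pow_le_pow_left₀ (norm_nonneg _) (hT (x i)).1 2) (hwpos i).le
  have hQM : Q ≤ η ^ 2 * M := le_trans hQle (by nlinarith [hEM, sq_nonneg η])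
  -- Jensen / Cauchy-Schwarz: P ≤ numerator
  have hstep : ∀ i, ‖x i - ∑ j, B i j • x j‖ ^ 2 ≤ ∑ j, B i j * ‖x i - x j‖ ^ 2 := by
    intro i
    have h1 : x i - ∑ j, B i j • x j = ∑ j, B i j • (x i - x j) := by
      rw [show (∑ j, B i j • (x i - x j)) = (∑ j, B i j • x i) - ∑ j, B i j • x j from by
        rw [← Finset.sum_sub_distrib]
        exact Finset.sum_congr rfl fun j _ => smul_sub _ _ _,
        ← Finset.sum_smul, hBrow, one_smul]
    have h2 : ‖x i - ∑ j, B i j • x j‖ ≤ ∑ j, B i j * ‖x i - x j‖ := by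
      rw [h1]
      refine (norm_sum_le _ _).trans_eq (Finset.sum_congr rfl fun j _ => ?_)
      rw [norm_smul, Real.norm_eq_abs, abs_of_nonneg (hB0 i j)]
    have h3 : (∑ j, B i j * ‖x i - x j‖) ^ 2
        ≤ (∑ j, B i j) * (∑ j, B i j * ‖x i - x j‖ ^ 2) := by
      refine Finset.sum_sq_le_sum_mul_sum_of_sq_eq_mul univ
        (fun j _ => hB0 i j) (fun j _ => mul_nonneg (hB0 i j) (sq_nonneg _)) fun j _ => ?_
      ring
    calc ‖x i - ∑ j, B i j • x j‖ ^ 2 ≤ (∑ j, B i j * ‖x i - x j‖) ^ 2 :=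
          pow_le_pow_left₀ (norm_nonneg _) h2 2
      _ ≤ (∑ j, B i j) * (∑ j, B i j * ‖x i - x j‖ ^ 2) := h3
      _ = ∑ j, B i j * ‖x i - x j‖ ^ 2 := by rw [hBrow, one_mul]
  have hPle : P ≤ ∑ i, ∑ j, w i * B i j * ‖x i - x j‖ ^ 2 := by
    rw [hP]
    refine Finset.sum_le_sum fun i _ => ?_
    calc w i * ‖x i - ∑ j, B i j • x j‖ ^ 2
        ≤ w i * ∑ j, B i j * ‖x i - x j‖ ^ 2 :=
          mul_le_mul_of_nonneg_left (hstep i) (hwpos i).le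
      _ = ∑ j, w i * B i j * ‖x i - x j‖ ^ 2 := by
          rw [Finset.mul_sum]
          exact Finset.sum_congr rfl fun j _ => (mul_assoc _ _ _).symm
  -- pointwise estimate
  have hptw : ∀ i, ‖x i‖ ≤ ‖x i - ∑ j, B i j • x j‖ + D * ‖∑ j, B i j • T (x j)‖ := by
    intro i
    have h1 : ‖x i‖ ≤ ‖x i - ∑ j, B i j • x j‖ + ‖∑ j, B i j • x j‖ := by
      have := norm_add_le (x i - ∑ j, B i j • x j) (∑ j, B i j • x j)
      rwa [sub_add_cancel] at this
    have h2 : ‖∑ j, B i j • x j‖ ≤ D * ‖T (∑ j, B i j • x j)‖ := (hT _).2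
    have h3 : T (∑ j, B i j • x j) = ∑ j, B i j • T (x j) := by
      rw [map_sum]
      exact Finset.sum_congr rfl fun j _ => map_smul T (B i j) (x j)
    rw [h3] at h2
    linarith
  -- M ≤ P + 2 D S + D² Q  where  S = ∑ w u v
  obtain ⟨S, hS⟩ : ∃ S : ℝ, S = ∑ i, w i *
      (‖x i - ∑ j, B i j • x j‖ * ‖∑ j, B i j • T (x j)‖) := ⟨_, rfl⟩
  have hM1 : M ≤ P + 2 * D * S + D ^ 2 * Q := by
    have h1 : M ≤ ∑ i, w i *
        (‖x i - ∑ j, B i j • x j‖ + D * ‖∑ j, B i j • T (x j)‖) ^ 2 := by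
      rw [hM]
      exact Finset.sum_le_sum fun i _ => mul_le_mul_of_nonneg_left
        (pow_le_pow_left₀ (norm_nonneg _) (hptw i) 2) (hwpos i).le
    have h2 : ∑ i, w i *
        (‖x i - ∑ j, B i j • x j‖ + D * ‖∑ j, B i j • T (x j)‖) ^ 2
        = P + 2 * D * S + D ^ 2 * Q := by
      rw [hP, hQ, hS, Finset.mul_sum, Finset.mul_sum, ← Finset.sum_add_distrib,
        ← Finset.sum_add_distrib]
      exact Finset.sum_congr rfl fun i _ => by ring
    linarith
  have hPnn : 0 ≤ P := by
    rw [hP]; exact Finset.sum_nonneg fun i _ => mul_nonneg (hwpos i).le (sq_nonneg _)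
  have hQnn : 0 ≤ Q := by
    rw [hQ]; exact Finset.sum_nonneg fun i _ => mul_nonneg (hwpos i).le (sq_nonneg _)
  have hMnn : 0 ≤ M := by
    rw [hM]; exact Finset.sum_nonneg fun i _ => mul_nonneg (hwpos i).le (sq_nonneg _)
  have hSnn : 0 ≤ S := by
    rw [hS]
    exact Finset.sum_nonneg fun i _ => mul_nonneg (hwpos i).le
      (mul_nonneg (norm_nonneg _) (norm_nonneg _))
  have hCS : S ^ 2 ≤ P * Q := by
    rw [hS, hP, hQ]
    refine Finset.sum_sq_le_sum_mul_sum_of_sq_eq_mul univ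
      (fun i _ => mul_nonneg (hwpos i).le (sq_nonneg _))
      (fun i _ => mul_nonneg (hwpos i).le (sq_nonneg _)) fun i _ => ?_
    ring
  have hSle : S ≤ Real.sqrt P * Real.sqrt Q := by
    have h1 : S ≤ Real.sqrt (P * Q) :=
      (Real.le_sqrt hSnn (mul_nonneg hPnn hQnn)).mpr hCS
    rwa [Real.sqrt_mul hPnn] at h1
  have hsqM : Real.sqrt M ≤ Real.sqrt P + D * Real.sqrt Q := by
    have e : (Real.sqrt P + D * Real.sqrt Q) ^ 2
        = P + 2 * D * (Real.sqrt P * Real.sqrt Q) + D ^ 2 * Q := by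
      rw [add_sq, mul_pow, Real.sq_sqrt hPnn, Real.sq_sqrt hQnn]; ring
    have hmul : 2 * D * S ≤ 2 * D * (Real.sqrt P * Real.sqrt Q) :=
      mul_le_mul_of_nonneg_left hSle (by linarith)
    have h1 : M ≤ (Real.sqrt P + D * Real.sqrt Q) ^ 2 := by
      rw [e]; linarith
    have h2 := Real.sqrt_le_sqrt h1
    rwa [Real.sqrt_sq (add_nonneg (Real.sqrt_nonneg P)
      (mul_nonneg hDpos.le (Real.sqrt_nonneg Q)))] at h2
  have hsqQ : Real.sqrt Q ≤ η * Real.sqrt M := by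
    have h1 : Q ≤ (η * Real.sqrt M) ^ 2 := by
      rw [mul_pow, Real.sq_sqrt hMnn]; exact hQM
    have h2 := Real.sqrt_le_sqrt h1
    rwa [Real.sqrt_sq (mul_nonneg hη0.le (Real.sqrt_nonneg M))] at h2
  have hkey : (1 - η * D) ^ 2 * M ≤ P := by
    have h0 : D * Real.sqrt Q ≤ D * (η * Real.sqrt M) :=
      mul_le_mul_of_nonneg_left hsqQ hDpos.le
    have h1 : (1 - η * D) * Real.sqrt M ≤ Real.sqrt P := by nlinarith [hsqM, h0]
    have h2 := pow_le_pow_left₀ (mul_nonneg h1ηD.le (Real.sqrt_nonneg M)) h1 2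
    rwa [mul_pow, Real.sq_sqrt hMnn, Real.sq_sqrt hPnn] at h2
  -- the X-denominator is at most 4 M
  have hSX4 : ∑ i, ∑ j, w i * w j * ‖x i - x j‖ ^ 2 ≤ 4 * M := by
    have h1 : ∀ i j : Fin n, w i * w j * ‖x i - x j‖ ^ 2
        ≤ 2 * (w i * ‖x i‖ ^ 2) * w j + 2 * w i * (w j * ‖x j‖ ^ 2) := by
      intro i j
      have h2 : ‖x i - x j‖ ≤ ‖x i‖ + ‖x j‖ := norm_sub_le _ _
      have h3 : ‖x i - x j‖ ^ 2 ≤ 2 * ‖x i‖ ^ 2 + 2 * ‖x j‖ ^ 2 := by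
        nlinarith [norm_nonneg (x i - x j), sq_nonneg (‖x i‖ - ‖x j‖)]
      calc w i * w j * ‖x i - x j‖ ^ 2
          ≤ w i * w j * (2 * ‖x i‖ ^ 2 + 2 * ‖x j‖ ^ 2) :=
            mul_le_mul_of_nonneg_left h3 (mul_nonneg (hwpos i).le (hwpos j).le)
        _ = 2 * (w i * ‖x i‖ ^ 2) * w j + 2 * w i * (w j * ‖x j‖ ^ 2) := by ring
    calc ∑ i, ∑ j, w i * w j * ‖x i - x j‖ ^ 2
        ≤ ∑ i, ∑ j, (2 * (w i * ‖x i‖ ^ 2) * w j + 2 * w i * (w j * ‖x j‖ ^ 2)) :=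
          Finset.sum_le_sum fun i _ => Finset.sum_le_sum fun j _ => h1 i j
      _ = ∑ i, (2 * (w i * ‖x i‖ ^ 2) + 2 * w i * M) := by
          refine Finset.sum_congr rfl fun i _ => ?_
          rw [Finset.sum_add_distrib, ← Finset.mul_sum, hwsum, mul_one,
            show (∑ j, 2 * w i * (w j * ‖x j‖ ^ 2)) = 2 * w i * ∑ j, w j * ‖x j‖ ^ 2 from
              (Finset.mul_sum _ _ _).symm, ← hM]
      _ = 4 * M := by
          rw [Finset.sum_add_distrib, ← Finset.mul_sum,
            show (∑ i, 2 * w i * M) = 2 * M * ∑ i, w i from by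
              rw [Finset.mul_sum]; exact Finset.sum_congr rfl fun i _ => by ring,
            hwsum, ← hM]
          ring
  -- positivity of the X-denominator
  have hSXpos : 0 < ∑ i, ∑ j, w i * w j * ‖x i - x j‖ ^ 2 := by
    refine Finset.sum_pos' (fun i _ => Finset.sum_nonneg fun j _ =>
      mul_nonneg (mul_nonneg (hwpos i).le (hwpos j).le) (sq_nonneg _)) ⟨i0, mem_univ _, ?_⟩
    refine Finset.sum_pos' (fun j _ =>
      mul_nonneg (mul_nonneg (hwpos i0).le (hwpos j).le) (sq_nonneg _)) ⟨j0, mem_univ _, ?_⟩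
    exact mul_pos (mul_pos (hwpos i0) (hwpos j0))
      (pow_pos (norm_pos_iff.mpr (sub_ne_zero.mpr hij)) 2)
  rw [le_div_iff₀ hSXpos]
  calc (1 - η * D) ^ 2 / 4 * ∑ i, ∑ j, w i * w j * ‖x i - x j‖ ^ 2
      ≤ (1 - η * D) ^ 2 / 4 * (4 * M) :=
        mul_le_mul_of_nonneg_left hSX4 (by positivity)
    _ = (1 - η * D) ^ 2 * M := by ring
    _ ≤ P := hkey
    _ ≤ ∑ i, ∑ j, w i * B i j * ‖x i - x j‖ ^ 2 := hPle
end

section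
/- Let 1 ≤ p < q < ∞. For any normed space (X, ‖·‖_X), measure space (Ω, μ), and measurable functions f, g : Ω → X with ‖f‖_{L_p(μ;X)} ≤ 1 and ‖g‖_{L_p(μ;X)} ≤ 1, the vector-valued Mazur map M_{p,q}f(ω) = f(ω)/‖f(ω)‖_X^{1−p/q} (set to 0 where f(ω)=0) satisfies ‖M_{p,q}f − M_{p,q}g‖_{L_q(μ;X)} ≤ C(p,q) ‖f − g‖_{L_p(μ;X)}^{p/q} for some constant C(p,q) depending only on p and q. -/
open MeasureTheory ENNReal

/-!
With `α = p / q ∈ (0, 1)` and `φ a = ‖a‖ ^ (α - 1) • a`, the Mazur map is `φ` applied pointwise, and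
`φ` is `α`-Hölder on all of `X` with constant `2`: assuming `‖b‖ ≤ ‖a‖`, either `‖a‖ ≤ ‖a - b‖`
and the triangle inequality with `‖φ a‖ = ‖a‖ ^ α` suffices, or
`φ a - φ b = ‖a‖ ^ (α - 1) • (a - b) - (‖b‖ ^ (α - 1) - ‖a‖ ^ (α - 1)) • b` and both terms are
controlled by `t ^ (α - 1) * s ≤ s ^ α` for `0 ≤ s ≤ t`. Raising the pointwise bound to the power
`q` turns `‖a - b‖ ^ α` into `‖a - b‖ ^ p`, and integrating gives the theorem with `C = 2`.
-/

lemma Real.rpow_sub_one_mul_le_rpow {s t α : ℝ} (hs : 0 ≤ s) (hst : s ≤ t) (hα : α ≤ 1) :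
    t ^ (α - 1) * s ≤ s ^ α := by
  rcases hs.eq_or_lt with rfl | hs
  · simpa using Real.rpow_nonneg le_rfl α
  calc t ^ (α - 1) * s ≤ s ^ (α - 1) * s :=
        mul_le_mul_of_nonneg_right (Real.rpow_le_rpow_of_nonpos hs hst (by linarith)) hs.le
    _ = s ^ α := by rw [← Real.rpow_add_one hs.ne', sub_add_cancel]

section MazurMap

variable {X : Type*} [NormedAddCommGroup X] [NormedSpace ℝ X] {α : ℝ}

lemma norm_rpow_sub_one_smul (hα : α ≠ 0) (a : X) : ‖(‖a‖ ^ (α - 1)) • a‖ = ‖a‖ ^ α := by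
  rw [norm_smul, Real.norm_of_nonneg (by positivity), ← Real.rpow_add_one' (norm_nonneg a)
    (by simpa using hα), sub_add_cancel]

lemma norm_rpow_smul_sub_rpow_smul_le_of_norm_sub_lt (hα₀ : 0 < α) (hα₁ : α ≤ 1) {a b : X}
    (hba : ‖b‖ ≤ ‖a‖) (hab : ‖a - b‖ < ‖a‖) :
    ‖(‖a‖ ^ (α - 1)) • a - (‖b‖ ^ (α - 1)) • b‖ ≤ 2 * ‖a - b‖ ^ α := by
  have hb : 0 < ‖b‖ := by linarith [norm_sub_norm_le a b]
  have hmono : ‖a‖ ^ (α - 1) ≤ ‖b‖ ^ (α - 1) :=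
    Real.rpow_le_rpow_of_nonpos hb hba (by linarith)
  have hsplit : (‖a‖ ^ (α - 1)) • a - (‖b‖ ^ (α - 1)) • b
      = (‖a‖ ^ (α - 1)) • (a - b) - (‖b‖ ^ (α - 1) - ‖a‖ ^ (α - 1)) • b := by
    rw [smul_sub, sub_smul]; abel
  have hfirst : ‖a‖ ^ (α - 1) * ‖a - b‖ ≤ ‖a - b‖ ^ α :=
    Real.rpow_sub_one_mul_le_rpow (norm_nonneg _) hab.le hα₁
  have hsecond : (‖b‖ ^ (α - 1) - ‖a‖ ^ (α - 1)) * ‖b‖ ≤ ‖a - b‖ ^ α :=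
    calc (‖b‖ ^ (α - 1) - ‖a‖ ^ (α - 1)) * ‖b‖
        = ‖b‖ ^ α - ‖a‖ ^ α + ‖a‖ ^ (α - 1) * (‖a‖ - ‖b‖) := by
          rw [sub_mul, mul_sub, ← Real.rpow_add_one hb.ne',
            ← Real.rpow_add_one (hb.trans_le hba).ne', sub_add_cancel]
          ring
      _ ≤ 0 + (‖a‖ - ‖b‖) ^ α := by
          gcongr
          · linarith [Real.rpow_le_rpow hb.le hba hα₀.le]
          · exact Real.rpow_sub_one_mul_le_rpow (by linarith) (by linarith [hb]) hα₁
      _ ≤ ‖a - b‖ ^ α := by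
          rw [zero_add]
          exact Real.rpow_le_rpow (by linarith) (norm_sub_norm_le a b) hα₀.le
  calc ‖(‖a‖ ^ (α - 1)) • a - (‖b‖ ^ (α - 1)) • b‖
      ≤ ‖a‖ ^ (α - 1) * ‖a - b‖ + (‖b‖ ^ (α - 1) - ‖a‖ ^ (α - 1)) * ‖b‖ := by
        rw [hsplit, ← norm_smul_of_nonneg (by positivity),
          ← norm_smul_of_nonneg (sub_nonneg.2 hmono)]
        exact norm_sub_le _ _
    _ ≤ 2 * ‖a - b‖ ^ α := by linarith

lemma norm_rpow_smul_sub_rpow_smul_le (hα₀ : 0 < α) (hα₁ : α ≤ 1) (a b : X) :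
    ‖(‖a‖ ^ (α - 1)) • a - (‖b‖ ^ (α - 1)) • b‖ ≤ 2 * ‖a - b‖ ^ α := by
  wlog hba : ‖b‖ ≤ ‖a‖ generalizing a b
  · rw [norm_sub_rev, norm_sub_rev a b]
    exact this b a (le_of_not_ge hba)
  rcases lt_or_ge ‖a - b‖ ‖a‖ with hab | hab
  · exact norm_rpow_smul_sub_rpow_smul_le_of_norm_sub_lt hα₀ hα₁ hba hab
  calc ‖(‖a‖ ^ (α - 1)) • a - (‖b‖ ^ (α - 1)) • b‖
      ≤ ‖a‖ ^ α + ‖b‖ ^ α := by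
        rw [← norm_rpow_sub_one_smul hα₀.ne' a, ← norm_rpow_sub_one_smul hα₀.ne' b]
        exact norm_sub_le _ _
    _ ≤ ‖a - b‖ ^ α + ‖a - b‖ ^ α := by gcongr; exact hba.trans hab
    _ = 2 * ‖a - b‖ ^ α := by ring

end MazurMap

lemma lintegral_rpow_rpow_le_of_norm_le_mul_rpow {Ω E F : Type*} [MeasurableSpace Ω]
    {μ : Measure Ω} [NormedAddCommGroup E] [NormedAddCommGroup F] {u : Ω → E} {v : Ω → F}
    {c p q : ℝ} (hc : 0 ≤ c) (hp : 0 ≤ p) (hq : 0 < q)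
    (huv : ∀ ω, ‖u ω‖ ≤ c * ‖v ω‖ ^ (p / q)) :
    (∫⁻ ω, (‖u ω‖₊ : ℝ≥0∞) ^ q ∂μ) ^ (1 / q) ≤
      ENNReal.ofReal c * (∫⁻ ω, (‖v ω‖₊ : ℝ≥0∞) ^ p ∂μ) ^ (1 / q) := by
  have hpointwise : ∀ ω, (‖u ω‖₊ : ℝ≥0∞) ^ q ≤ ENNReal.ofReal c ^ q * (‖v ω‖₊ : ℝ≥0∞) ^ p := by
    intro ω
    have h := ENNReal.ofReal_le_ofReal (huv ω)
    rw [ENNReal.ofReal_mul hc, ← ENNReal.ofReal_rpow_of_nonneg (norm_nonneg _) (by positivity),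
      ofReal_norm, ofReal_norm] at h
    calc (‖u ω‖₊ : ℝ≥0∞) ^ q ≤ (ENNReal.ofReal c * ‖v ω‖ₑ ^ (p / q)) ^ q :=
        ENNReal.rpow_le_rpow h hq.le
      _ = ENNReal.ofReal c ^ q * (‖v ω‖₊ : ℝ≥0∞) ^ p := by
        rw [ENNReal.mul_rpow_of_nonneg _ _ hq.le, ← ENNReal.rpow_mul, div_mul_cancel₀ p hq.ne',
          enorm_eq_nnnorm]
  calc (∫⁻ ω, (‖u ω‖₊ : ℝ≥0∞) ^ q ∂μ) ^ (1 / q)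
      ≤ (ENNReal.ofReal c ^ q * ∫⁻ ω, (‖v ω‖₊ : ℝ≥0∞) ^ p ∂μ) ^ (1 / q) := by
        rw [← lintegral_const_mul' _ _ (by finiteness)]
        gcongr with ω
        exact hpointwise ω
    _ = ENNReal.ofReal c * (∫⁻ ω, (‖v ω‖₊ : ℝ≥0∞) ^ p ∂μ) ^ (1 / q) := by
        rw [ENNReal.mul_rpow_of_nonneg _ _ (by positivity), one_div,
          ENNReal.rpow_rpow_inv hq.ne']

/-- Hölder continuity of the vector-valued Mazur map `M_{p,q} f = f/‖f‖^{1-p/q}`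
from the unit ball of `L_p(μ; X)` to `L_q(μ; X)`:
‖M_{p,q}f − M_{p,q}g‖_{L_q} ≤ C(p,q) ‖f − g‖_{L_p}^{p/q}. -/
theorem mazur_map_holder (p q : ℝ) (hp : 1 ≤ p) (hpq : p < q) :
    ∃ C : ℝ, 0 < C ∧
      ∀ (X : Type*) [NormedAddCommGroup X] [NormedSpace ℝ X]
        (Ω : Type*) [MeasurableSpace Ω] (μ : Measure Ω) (f g : Ω → X),
        AEStronglyMeasurable f μ → AEStronglyMeasurable g μ →
        (∫⁻ ω, (‖f ω‖₊ : ℝ≥0∞) ^ p ∂μ) ≤ 1 →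
        (∫⁻ ω, (‖g ω‖₊ : ℝ≥0∞) ^ p ∂μ) ≤ 1 →
        (∫⁻ ω, (‖(‖f ω‖ ^ (p / q - 1)) • f ω -
            (‖g ω‖ ^ (p / q - 1)) • g ω‖₊ : ℝ≥0∞) ^ q ∂μ) ^ (1 / q) ≤
          ENNReal.ofReal C *
            (∫⁻ ω, (‖f ω - g ω‖₊ : ℝ≥0∞) ^ p ∂μ) ^ (1 / q) := by
  have hq : 0 < q := by linarith
  have hα₀ : 0 < p / q := by positivity
  have hα₁ : p / q ≤ 1 := (div_le_one hq).2 hpq.le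
  refine ⟨2, two_pos, fun X _ _ Ω _ μ f g _ _ _ _ => ?_⟩
  exact lintegral_rpow_rpow_le_of_norm_le_mul_rpow zero_le_two (by linarith) hq
    fun ω => norm_rpow_smul_sub_rpow_smul_le hα₀ hα₁ (f ω) (g ω)
end

section
/- Fix d ∈ ℕ, p ∈ (0,∞), a metric space (M, d_M), and a sequence of connected d-regular graphs G_n = (V_n, E_n) with |V_n| → ∞ and sup_n γ(A_{G_n}, d_M^p) < ∞. Then there do not exist moduli ω, Ω : [0,∞) → [0,∞) with ω ≤ Ω pointwise and lim_{t→∞} ω(t) = ∞, together with maps f_n : V_n → M satisfying ω(d_{G_n}(x,y)) ≤ d_M(f_n(x), f_n(y)) ≤ Ω(d_{G_n}(x,y)) for all x,y ∈ V_n and all n. In other words, the family {(G_n, d_{G_n})} does not embed equi-coarsely into M. -/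
/-!
An equi-coarse embedding maps edges to pairs at distance at most `Ω 1`, so the edge average on the
right of the Poincaré inequality is bounded independently of the graph. On the other hand a ball
of radius `r` in a `d`-regular graph has at most `(d + 1) ^ r` vertices, so once the graph has
`2 (d + 1) ^ r` vertices every vertex is farther than `r` from half of them; since `ω → ∞`, their
images are far apart and the uniform average on the left is unbounded.
-/

open Filter Finset

namespace SimpleGraph

variable {V : Type*} {G : SimpleGraph V}

lemma Connected.exists_adj_dist_add_one_le (hG : G.Connected) {u v : V} (huv : u ≠ v) :
    ∃ w, G.Adj w v ∧ G.dist u w + 1 ≤ G.dist u v := by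
  obtain ⟨p, hp⟩ := hG.exists_walk_length_eq_dist v u
  obtain ⟨w, hvw, q, rfl⟩ := p.exists_eq_cons_of_ne huv.symm
  refine ⟨w, hvw.symm, ?_⟩
  rw [dist_comm, dist_comm (u := u), ← hp, Walk.length_cons]
  exact Nat.add_le_add_right (dist_le q) 1

variable [Fintype V] [DecidableRel G.Adj]

lemma Connected.card_dist_le_le_pow (hG : G.Connected) {d : ℕ} (hdeg : ∀ v, G.degree v ≤ d)
    (u : V) (r : ℕ) : #{v | G.dist u v ≤ r} ≤ (d + 1) ^ r := by
  classical
  induction r with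
  | zero => simp [hG.dist_eq_zero_iff, Finset.card_le_one]
  | succ r ih =>
    have hsub : ({v | G.dist u v ≤ r + 1} : Finset V) ⊆
        ({v | G.dist u v ≤ r} : Finset V).biUnion fun w => insert w (G.neighborFinset w) := by
      intro v hv
      simp only [mem_filter, mem_univ, true_and, mem_biUnion, mem_insert,
        mem_neighborFinset] at hv ⊢
      obtain rfl | huv := eq_or_ne u v
      · exact ⟨u, by simp, Or.inl rfl⟩
      · obtain ⟨w, hwv, hw⟩ := hG.exists_adj_dist_add_one_le huv
        exact ⟨w, by omega, Or.inr hwv⟩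
    calc #{v | G.dist u v ≤ r + 1}
        ≤ ∑ w ∈ {v | G.dist u v ≤ r}, #(insert w (G.neighborFinset w)) :=
          (card_le_card hsub).trans card_biUnion_le
      _ ≤ ∑ w ∈ {v | G.dist u v ≤ r}, (d + 1) := by
          gcongr with w
          exact (card_insert_le _ _).trans (by simpa using hdeg w)
      _ ≤ (d + 1) ^ (r + 1) := by
          rw [sum_const, smul_eq_mul, pow_succ]
          gcongr

lemma IsRegularOfDegree.sum_sum_ite_adj_le {d : ℕ} (hG : G.IsRegularOfDegree d)
    {g : V → V → ℝ} {c : ℝ} (hg : ∀ u v, G.Adj u v → g u v ≤ c) :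
    ∑ u, ∑ v, (if G.Adj u v then g u v else 0) ≤ d * Fintype.card V * c := by
  calc ∑ u, ∑ v, (if G.Adj u v then g u v else 0)
      = ∑ u, ∑ v ∈ G.neighborFinset u, g u v := by
        simp only [← sum_filter, neighborFinset_eq_filter]
    _ ≤ ∑ u : V, ∑ v ∈ G.neighborFinset u, c :=
        sum_le_sum fun u _ => sum_le_sum fun v hv => hg u v ((mem_neighborFinset ..).mp hv)
    _ = d * Fintype.card V * c := by
        simp only [sum_const, card_neighborFinset_eq_degree, hG.degree_eq, card_univ,
          nsmul_eq_mul]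
        ring

lemma IsRegularOfDegree.edge_average_le {d : ℕ} (hG : G.IsRegularOfDegree d)
    {g : V → V → ℝ} {c : ℝ} (hc : 0 ≤ c) (hg : ∀ u v, G.Adj u v → g u v ≤ c) :
    1 / (d * Fintype.card V) * ∑ u, ∑ v, (if G.Adj u v then g u v else 0) ≤ c := by
  rcases eq_or_ne ((d : ℝ) * Fintype.card V) 0 with h | h
  · simpa [h] using hc
  · rw [one_div_mul_eq_div, div_le_iff₀' (by positivity)]
    exact hG.sum_sum_ite_adj_le hg

end SimpleGraph

lemma card_mul_le_two_mul_sum {V : Type*} [Fintype V] {D : V → ℝ} {s : Finset V} {R : ℝ}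
    (hR : 0 ≤ R) (hs : 2 * #s ≤ Fintype.card V) (hD0 : ∀ v, 0 ≤ D v)
    (hD : ∀ v ∉ s, R ≤ D v) : Fintype.card V * R ≤ 2 * ∑ v, D v := by
  classical
  have hcompl : (Fintype.card V : ℝ) ≤ 2 * #sᶜ := by
    rw [card_compl]
    exact_mod_cast (by omega : Fintype.card V ≤ 2 * (Fintype.card V - #s))
  calc Fintype.card V * R ≤ 2 * (#sᶜ * R) := by
        rw [← mul_assoc]
        exact mul_le_mul_of_nonneg_right hcompl hR
    _ ≤ 2 * ∑ v ∈ sᶜ, D v := by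
        gcongr
        simpa using card_nsmul_le_sum sᶜ D R fun v hv => hD v (mem_compl.mp hv)
    _ ≤ 2 * ∑ v, D v := mul_le_mul_of_nonneg_left (sum_le_univ_sum_of_nonneg hD0) two_pos.le

lemma half_le_average_of_far {V : Type*} [Fintype V] [Nonempty V] {D : V → V → ℝ}
    {s : V → Finset V} {R : ℝ} (hR : 0 ≤ R) (hs : ∀ u, 2 * #(s u) ≤ Fintype.card V)
    (hD0 : ∀ u v, 0 ≤ D u v) (hD : ∀ u, ∀ v ∉ s u, R ≤ D u v) :
    R / 2 ≤ 1 / (Fintype.card V : ℝ) ^ 2 * ∑ u, ∑ v, D u v := by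
  have hrows := sum_le_sum fun u (_ : u ∈ univ) =>
    card_mul_le_two_mul_sum hR (hs u) (hD0 u) (hD u)
  rw [sum_const, card_univ, nsmul_eq_mul, ← mul_sum] at hrows
  rw [one_div_mul_eq_div, le_div_iff₀ (by positivity)]
  linarith

/-- Gromov's observation: a sequence of connected d-regular graphs with
uniformly bounded nonlinear spectral gaps with respect to (M, d_M^p) does not
embed equi-coarsely into M. -/
theorem expanders_no_equicoarse_embedding {M : Type*} [MetricSpace M]
    (d : ℕ) (p : ℝ) (hp : 0 < p)
    (m : ℕ → ℕ) (hm : Tendsto m atTop atTop)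
    (G : ∀ k, SimpleGraph (Fin (m k))) [∀ k, DecidableRel (G k).Adj]
    (hconn : ∀ k, (G k).Connected)
    (hreg : ∀ k, (G k).IsRegularOfDegree d)
    (γ : ℝ)
    (hγ : ∀ k, ∀ x : Fin (m k) → M,
      (1 / (m k : ℝ) ^ 2) * (∑ u, ∑ v, dist (x u) (x v) ^ p) ≤
        γ * ((1 / ((d : ℝ) * m k)) *
          ∑ u, ∑ v, if (G k).Adj u v then dist (x u) (x v) ^ p else 0)) :
    ¬ ∃ (ω Ω : ℝ → ℝ) (f : ∀ k, Fin (m k) → M),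
        (∀ t, ω t ≤ Ω t) ∧ Tendsto ω atTop atTop ∧
        ∀ k, ∀ x y : Fin (m k),
          ω ((G k).dist x y : ℝ) ≤ dist (f k x) (f k y) ∧
            dist (f k x) (f k y) ≤ Ω ((G k).dist x y : ℝ) := by
  rintro ⟨ω, Ω, f, -, hω, hf⟩
  -- The `max _ 0` avoid case splits on the signs of `Ω 1` (a negative base is junk for `rpow`) and `γ`.
  set c := max (Ω 1) 0 ^ p
  have hedge (k) (u v) (huv : (G k).Adj u v) : dist (f k u) (f k v) ^ p ≤ c := by
    have := (hf k u v).2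
    rw [SimpleGraph.dist_eq_one_iff_adj.mpr huv, Nat.cast_one] at this
    exact Real.rpow_le_rpow dist_nonneg (this.trans (le_max_left _ _)) hp.le
  set R := 2 * max γ 0 * c + 1
  obtain ⟨T, hT⟩ := eventually_atTop.mp ((hω.eventually_ge_atTop 0).and
    (((tendsto_rpow_atTop hp).comp hω).eventually_ge_atTop R))
  set r := ⌈T⌉₊
  obtain ⟨k, hk⟩ := (hm.eventually_ge_atTop (2 * (d + 1) ^ r)).exists
  have : Nonempty (Fin (m k)) := ⟨⟨0, lt_of_lt_of_le (by positivity) hk⟩⟩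
  have hball (u) : 2 * #{v | (G k).dist u v ≤ r} ≤ Fintype.card (Fin (m k)) := by
    have := (hconn k).card_dist_le_le_pow (fun v => (hreg k v).le) u r
    rw [Fintype.card_fin]
    omega
  have hfar (u) : ∀ v ∉ ({v | (G k).dist u v ≤ r} : Finset _),
      R ≤ dist (f k u) (f k v) ^ p := by
    intro v hv
    simp only [mem_filter, mem_univ, true_and, not_le] at hv
    obtain ⟨hω0, hωR⟩ := hT _ ((Nat.le_ceil T).trans (Nat.cast_le.mpr hv.le))
    exact hωR.trans (Real.rpow_le_rpow hω0 (hf k u v).1 hp.le)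
  have hlow := half_le_average_of_far (by positivity) hball (fun u v => by positivity) hfar
  have hedges := (hreg k).edge_average_le (by positivity) (hedge k)
  rw [Fintype.card_fin] at hlow hedges
  linarith [hγ k (f k), mul_le_mul (le_max_left γ 0) hedges (by positivity) (le_max_right γ 0)]
end
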